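/- arXiv:2109.09481 — 4 statements merged into one kernel-verified Lean document; each statement's English description precedes it below -/
import Mathlib

section
/- Let k ≥ 1 and let ω_2,…,ω_k be integers. In the polynomial ring ℤ[x_1,…,x_k], consider the k×k matrix M′ whose rows are indexed by i ∈ {1,…,k} and whose columns are as follows: for l ∈ {1,…,k−1}, the l-th column has entries M′_{i,l} = 1 − (ω_{l+1}−1)x_i if i = l+1 and M′_{i,l} = −ω_{l+1} x_i otherwise; the last (k-th) column has entries M′_{i,k} = −x_i. Then det(M′) = (−1)^k · x_1 · ∏_{i=2}^k (1 + x_i). -/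
/-!
Adding `ω_{l+1}` times the last column to column `l < k` kills every entry of that column except
the one in row `l + 1`, which becomes `1 + x_{l+1}`. In the resulting matrix the first row has a
single nonzero entry `-x_1`, in the last column, and the complementary minor is diagonal with
entries `1 + x_2, …, 1 + x_k`.
-/

open MvPolynomial

namespace Matrix

variable {R : Type*} [CommRing R] {m : ℕ}

theorem det_of_col_castSucc_eq_subdiag (A : Matrix (Fin (m + 1)) (Fin (m + 1)) R)
    (d : Fin m → R) (hA : ∀ i l, A i l.castSucc = if i = l.succ then d l else 0) :
    A.det = (-1) ^ m * A 0 (Fin.last m) * ∏ l, d l := by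
  have hdiag : A.submatrix Fin.succ Fin.castSucc = diagonal d := by
    ext i j
    by_cases h : i = j <;> simp [hA, h]
  rw [det_succ_row_zero, Fin.sum_univ_castSucc, Fin.succAbove_last, hdiag, det_diagonal]
  simp [hA, (Fin.succ_ne_zero _).symm]

theorem det_eq_of_col_castSucc_eq_add_mul_last {A B : Matrix (Fin (m + 1)) (Fin (m + 1)) R}
    (c : Fin m → R) (hlast : ∀ i, A i (Fin.last m) = B i (Fin.last m))
    (hA : ∀ i l, A i l.castSucc = B i l.castSucc + c l * B i (Fin.last m)) :
    A.det = B.det := by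
  rw [← det_transpose A, ← det_transpose B]
  refine det_eq_of_forall_row_eq_smul_add_const (Fin.lastCases 0 c) (Fin.last m)
    (Fin.lastCases_last ..) fun j i => ?_
  induction j using Fin.lastCases with
  | last => simp [hlast]
  | cast l => simp [hA]

theorem det_of_col_castSucc_eq_subdiag_add_mul_last (A : Matrix (Fin (m + 1)) (Fin (m + 1)) R)
    (d c : Fin m → R)
    (hA : ∀ i l, A i l.castSucc = (if i = l.succ then d l else 0) + c l * A i (Fin.last m)) :
    A.det = (-1) ^ m * A 0 (Fin.last m) * ∏ l, d l := by
  let B : Matrix (Fin (m + 1)) (Fin (m + 1)) R :=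
    of fun i => Fin.lastCases (A i (Fin.last m)) fun l => if i = l.succ then d l else 0
  rw [det_eq_of_col_castSucc_eq_add_mul_last (B := B) c (by simp [B]) (by simp [B, hA]),
    det_of_col_castSucc_eq_subdiag B d (by simp [B])]
  simp [B]

end Matrix

-- Indices are `0`-based: `X i` is `x_{i+1}` and `ω ⟨l, _⟩` is `ω_{l+1}`.
/-- **Claim 1 in the proof of Theorem 1.2.** In `ℤ[x_1,…,x_k]`, the matrix `M′`
(whose columns `l = 1,…,k−1` have entries `1 − (ω_{l+1}−1)x_i` for `i = l+1` and
`−ω_{l+1} x_i` otherwise, and whose last column has entries `−x_i`) satisfies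
`det M′ = (−1)^k x_1 ∏_{i=2}^k (1 + x_i)`.
Here indices are `0`-based: the variable `X i` is `x_{i+1}` and `ω ⟨l⟩` is `ω_{l+1}`. -/
theorem det_M_prime (k : ℕ) (hk : 1 ≤ k) (ω : Fin k → ℤ)
    (M' : Matrix (Fin k) (Fin k) (MvPolynomial (Fin k) ℤ))
    (hM' : ∀ i l : Fin k,
      M' i l =
        if h : (l : ℕ) + 1 < k then
          (if (i : ℕ) = (l : ℕ) + 1 then
              1 - MvPolynomial.C (ω ⟨(l : ℕ) + 1, h⟩ - 1) * MvPolynomial.X i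
            else -(MvPolynomial.C (ω ⟨(l : ℕ) + 1, h⟩) * MvPolynomial.X i))
        else -MvPolynomial.X i) :
    M'.det = (-1) ^ k * MvPolynomial.X (⟨0, hk⟩ : Fin k) *
      ∏ i ∈ Finset.univ.filter (fun i : Fin k => 1 ≤ (i : ℕ)),
        (1 + MvPolynomial.X i) := by
  obtain ⟨m, rfl⟩ : ∃ m, k = m + 1 := ⟨k - 1, by omega⟩
  have hlast : ∀ i, M' i (Fin.last m) = -X i := fun i => by simp [hM']
  have hcol : ∀ (i : Fin (m + 1)) (l : Fin m), M' i l.castSucc =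
      (if i = l.succ then 1 + X l.succ else 0) + C (ω l.succ) * M' i (Fin.last m) := by
    intro i l
    have hsucc : (⟨(l.castSucc : ℕ) + 1, by simp⟩ : Fin (m + 1)) = l.succ := rfl
    rw [hlast, hM', dif_pos (by simp), hsucc]
    by_cases h : i = l.succ
    · subst h
      simp only [Fin.val_castSucc, Fin.val_succ, if_true, map_sub, map_one]
      ring
    · rw [if_neg (by simpa [Fin.ext_iff] using h), if_neg h]
      ring
  rw [Matrix.det_of_col_castSucc_eq_subdiag_add_mul_last M' (fun l => 1 + X l.succ) _ hcol, hlast,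
    Finset.prod_filter, Fin.prod_univ_succ]
  simp only [Fin.val_zero, Fin.val_succ, Nat.one_le_iff_ne_zero, ne_eq, not_true_eq_false,
    if_false, Nat.add_one_ne_zero, not_false_eq_true, if_true, one_mul, Fin.mk_zero']
  ring
end

section
/- Let k ≥ 1 and let ω_1,…,ω_k be integers. In the polynomial ring ℤ[x_1,…,x_k,y], consider the (k+1)×(k+1) matrix M defined by: M_{ij} = δ_{ij}(1 + x_i) − ω_j x_i for 1 ≤ i,j ≤ k; M_{i,k+1} = −x_i for 1 ≤ i ≤ k; M_{k+1,1} = −y; M_{k+1,j} = 0 for 2 ≤ j ≤ k; and M_{k+1,k+1} = 1. Then det(M) = −y·x_1·∏_{i=2}^k (1 + x_i) + ∏_{i=1}^k (1 + x_i) − ∑_{j=1}^k ω_j x_j ∏_{i≠j} (1 + x_i). -/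
/-!
Placing the last row and column of `M` in a `1 × 1` block with entry `1`, the Schur complement
of that block is `diag(1 + x_i) - x wᵀ` with `w_j = ω_j + δ_{j1} y`. Its determinant is given by
the matrix determinant lemma `det (A + u vᵀ) = det A + vᵀ adj(A) u` for `A = diag(1 + x_i)`,
whose adjugate is diagonal with entries `∏_{i ≠ j} (1 + x_i)`. The matrix determinant lemma
follows from the Weinstein–Aronszajn identity when `det A` is a unit, and in general by
specialising the generic matrix, whose determinant is a nonzero polynomial.
-/

open MvPolynomial

namespace Matrix

variable {n : Type*} [Fintype n] [DecidableEq n]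

theorem det_add_vecMulVec_of_isUnit {R : Type*} [CommRing R] {A : Matrix n n R}
    (hA : IsUnit A.det) (u v : n → R) :
    (A + vecMulVec u v).det = A.det + v ⬝ᵥ A.adjugate *ᵥ u := by
  rw [vecMulVec_eq Unit, det_add_replicateCol_mul_replicateRow hA,
    det_unique (1 + replicateRow Unit v * A⁻¹ * replicateCol Unit u), Matrix.add_apply,
    one_apply_eq, Matrix.mul_assoc, ← replicateCol_mulVec, replicateRow_mul_replicateCol_apply,
    inv_def, smul_mulVec, dotProduct_smul, smul_eq_mul, mul_add, mul_one,
    Ring.mul_inverse_cancel_left _ _ hA]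

section map

variable {R S : Type*} [CommRing R] [CommRing S] (f : R →+* S) (A : Matrix n n R) (u v : n → R)

theorem _root_.RingHom.map_det_add_vecMulVec :
    f (A + vecMulVec u v).det = (f.mapMatrix A + vecMulVec (f ∘ u) (f ∘ v)).det := by
  rw [f.map_det]
  congr 1
  ext i j
  simp [vecMulVec_apply]

theorem _root_.RingHom.map_det_add_dotProduct_adjugate_mulVec :
    f (A.det + v ⬝ᵥ A.adjugate *ᵥ u) =
      (f.mapMatrix A).det + (f ∘ v) ⬝ᵥ (f.mapMatrix A).adjugate *ᵥ (f ∘ u) := by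
  have hvec : (f.mapMatrix A).adjugate *ᵥ (f ∘ u) = f ∘ (A.adjugate *ᵥ u) := by
    ext i; rw [← f.map_adjugate]; exact (f.map_mulVec _ _ i).symm
  rw [hvec, ← f.map_dotProduct, ← f.map_det, map_add]

end map

theorem det_add_vecMulVec {R : Type*} [CommRing R] (A : Matrix n n R) (u v : n → R) :
    (A + vecMulVec u v).det = A.det + v ⬝ᵥ A.adjugate *ᵥ u := by
  let S := MvPolynomial ((n × n) ⊕ (n ⊕ n)) ℤ
  let A' : Matrix n n S := (rename Sum.inl).mapMatrix (mvPolynomialX n n ℤ)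
  let u' : n → S := fun i => X (.inr (.inl i))
  let v' : n → S := fun i => X (.inr (.inr i))
  have generic : (A' + vecMulVec u' v').det = A'.det + v' ⬝ᵥ A'.adjugate *ᵥ u' := by
    let φ := algebraMap S (FractionRing S)
    have hdet : IsUnit (φ.mapMatrix A').det := by
      rw [← φ.map_det, isUnit_iff_ne_zero, map_ne_zero_iff _ (IsFractionRing.injective _ _),
        ← AlgHom.map_det, map_ne_zero_iff _ (rename_injective _ Sum.inl_injective)]
      exact det_mvPolynomialX_ne_zero n ℤ
    apply IsFractionRing.injective S (FractionRing S)
    rw [φ.map_det_add_vecMulVec, φ.map_det_add_dotProduct_adjugate_mulVec]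
    exact det_add_vecMulVec_of_isUnit hdet _ _
  let f : S →+* R := (aeval (Sum.elim (fun p : n × n => A p.1 p.2) (Sum.elim u v))).toRingHom
  have hA : f.mapMatrix A' = A := by ext i j; simp [A', f, mvPolynomialX]; exact aeval_X _ _
  have hu : f ∘ u' = u := by ext i; exact aeval_X _ _
  have hv : f ∘ v' = v := by ext i; exact aeval_X _ _
  rw [← hA, ← hu, ← hv, ← f.map_det_add_vecMulVec, generic,
    f.map_det_add_dotProduct_adjugate_mulVec]

theorem det_diagonal_add_vecMulVec {R : Type*} [CommRing R] (d u v : n → R) :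
    (diagonal d + vecMulVec u v).det =
      ∏ i, d i + ∑ j, v j * u j * ∏ i ∈ Finset.univ.erase j, d i := by
  rw [det_add_vecMulVec, det_diagonal, adjugate_diagonal]
  congr 1
  refine Finset.sum_congr rfl fun j _ => ?_
  rw [mulVec_diagonal]
  ring

end Matrix

open Matrix

/-- The variable `X (some i)` is `x_{i+1}` and `X none` is `y`; the row and column indexed by
`none` are the last ones. -/
theorem det_M_full (k : ℕ) (hk : 1 ≤ k) (ω : Fin k → ℤ)
    (M : Matrix (Option (Fin k)) (Option (Fin k)) (MvPolynomial (Option (Fin k)) ℤ))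
    (hM₁ : ∀ i j : Fin k,
      M (some i) (some j) = (if i = j then 1 + MvPolynomial.X (some i) else 0) -
        MvPolynomial.C (ω j) * MvPolynomial.X (some i))
    (hM₂ : ∀ i : Fin k, M (some i) none = -MvPolynomial.X (some i))
    (hM₃ : ∀ j : Fin k, M none (some j) =
      if j = (⟨0, hk⟩ : Fin k) then -MvPolynomial.X (none : Option (Fin k)) else 0)
    (hM₄ : M none none = 1) :
    M.det =
      -(MvPolynomial.X (none : Option (Fin k)) *
          MvPolynomial.X (some (⟨0, hk⟩ : Fin k)) *
          ∏ i ∈ Finset.univ.filter (fun i : Fin k => 1 ≤ (i : ℕ)),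
            (1 + MvPolynomial.X (some i))) +
        (∏ i : Fin k, (1 + MvPolynomial.X (some i))) -
        ∑ j : Fin k, MvPolynomial.C (ω j) * MvPolynomial.X (some j) *
          ∏ i ∈ Finset.univ.filter (fun i : Fin k => i ≠ j),
            (1 + MvPolynomial.X (some i)) := by
  set i₀ : Fin k := ⟨0, hk⟩
  set x : Fin k → MvPolynomial (Option (Fin k)) ℤ := fun i => X (some i)
  set w : Fin k → MvPolynomial (Option (Fin k)) ℤ := fun j => C (ω j) + if j = i₀ then X none else 0
  set e : Fin k ⊕ Unit ≃ Option (Fin k) := (Equiv.optionEquivSumPUnit.{0} (Fin k)).symm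
  have hblocks : M.submatrix e e = fromBlocks (diagonal (1 + x) - vecMulVec x (C ∘ ω))
      (replicateCol Unit (-x)) (replicateRow Unit fun j => if j = i₀ then -X none else 0) 1 := by
    ext (i | i) (j | j) : 1 <;>
      simp [e, x, hM₁, hM₂, hM₃, hM₄, diagonal_apply, vecMulVec_apply, mul_comm]
  have hschur : M.det = (diagonal (1 + x) + vecMulVec (-x) w).det := by
    rw [← det_submatrix_equiv_self e, hblocks, det_fromBlocks_one₂₂]
    congr 1
    ext i j : 1
    by_cases hj : j = i₀ <;> simp [Matrix.mul_apply, vecMulVec_apply, w, hj] <;> ring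
  have hpos : Finset.univ.filter (fun i : Fin k => 1 ≤ (i : ℕ)) = Finset.univ.erase i₀ := by
    ext i
    simp [i₀, Fin.ext_iff, Nat.one_le_iff_ne_zero]
  rw [hschur, det_diagonal_add_vecMulVec, hpos]
  simp only [Finset.filter_ne', w, x, Pi.add_apply, Pi.one_apply, Pi.neg_apply, mul_neg, add_mul,
    Finset.sum_add_distrib, ite_mul, zero_mul, Finset.sum_ite_eq',
    Finset.mem_univ, if_true, neg_mul, Finset.sum_neg_distrib]
  ring
end

section
/- Let k ≥ 1, let n_1,…,n_k be positive integers, let ω_1,…,ω_k be positive integers, and let δ_1,…,δ_k be nonnegative integers with δ_j ≤ n_j − 1 for all j. Fix an index i ∈ {1,…,k} with ω_i = 1, and suppose n_i satisfies n_i − 1 = ∑_{j≠i}(n_j − 1) + δ_i. Then for every integer m ≥ n_i, d((n_1,…,n_{i−1}, m, n_{i+1},…,n_k), δ, ω) = d((n_1,…,n_{i−1}, n_i, n_{i+1},…,n_k), δ, ω). -/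
/-!
When `ω_i = 1` the polynomial `t̂_i + h` does not involve `t_i`, so the `i`-th factor
`F_i(N) = ∑_{j<N} (t̂_i + h)^{N-1-j} t_i^j` satisfies `F_i(N + 1) = (t̂_i + h)^N + t_i F_i(N)`.
The other factors multiply to a homogeneous polynomial `Q` of degree
`∑_{j≠i} (n_j - 1) ≤ n_i - δ_i - 1`, so for `N ≥ n_i` the summand `(t̂_i + h)^N Q` has too small a
`t_i`-degree to contribute to the coefficient, while multiplying by `t_i` only raises the wanted
`t_i`-exponent by one.
-/

open MvPolynomial Finset

namespace MvPolynomial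

variable {σ R : Type*} [CommSemiring R]

-- The exponent `N + 1 - 1 - j` is the one of the sum of length `N + 1`, so that this rewrites it.
theorem sum_range_succ_pow_mul_pow (x y : R) (N : ℕ) :
    ∑ j ∈ range (N + 1), y ^ (N + 1 - 1 - j) * x ^ j =
      y ^ N + x * ∑ j ∈ range N, y ^ (N - 1 - j) * x ^ j := by
  rw [sum_range_succ', add_comm, Nat.add_sub_cancel, Nat.sub_zero, pow_zero, mul_one, mul_sum]
  congr 1
  refine sum_congr rfl fun j hj => ?_
  rw [show N - (j + 1) = N - 1 - j by omega, pow_succ]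
  ring

theorem IsHomogeneous.sum_range_pow_mul_pow {x y : MvPolynomial σ R} {a : ℕ}
    (hx : x.IsHomogeneous a) (hy : y.IsHomogeneous a) (N : ℕ) :
    (∑ j ∈ range N, y ^ (N - 1 - j) * x ^ j).IsHomogeneous (a * (N - 1)) := by
  refine IsHomogeneous.sum _ _ _ fun j hj => ?_
  convert (hy.pow _).mul (hx.pow j) using 1
  rw [← mul_add, Nat.sub_add_cancel (by simp at hj; omega)]

theorem coeff_eq_zero_of_degreeOf_lt {p : MvPolynomial σ R} {v : σ} {e : σ →₀ ℕ}
    (h : p.degreeOf v < e v) : coeff e p = 0 :=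
  notMem_support_iff.1 (notMem_support_of_degreeOf_lt v h)

theorem coeff_add_single_sum_range_pow_mul_X_pow_mul {v : σ} {y Q : MvPolynomial σ R}
    (hy : y.degreeOf v = 0) {e : σ →₀ ℕ} (hQ : Q.degreeOf v ≤ e v) {n m : ℕ} (hnm : n ≤ m) :
    coeff (e + Finsupp.single v (m - n)) ((∑ j ∈ range m, y ^ (m - 1 - j) * X v ^ j) * Q) =
      coeff e ((∑ j ∈ range n, y ^ (n - 1 - j) * X v ^ j) * Q) := by
  induction m, hnm using Nat.le_induction with
  | base => simp
  | succ m hnm ih =>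
    have hyQ : (y ^ m * Q).degreeOf v < (e + Finsupp.single v (m + 1 - n)) v := by
      have := (degreeOf_mul_le v (y ^ m) Q).trans (add_le_add_left (degreeOf_pow_le v y m) _)
      simp only [hy, mul_zero, Finsupp.add_apply, Finsupp.single_eq_same] at this ⊢
      omega
    rw [sum_range_succ_pow_mul_pow, add_mul, coeff_add, coeff_eq_zero_of_degreeOf_lt hyQ,
      zero_add, show m + 1 - n = m - n + 1 by omega, Finsupp.single_add, ← add_assoc,
      mul_assoc, mul_comm, coeff_mul_X, ih]

end MvPolynomial

noncomputable section

namespace KalmanDegree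

variable {ι R : Type*} [Fintype ι] [CommRing R] {ω : ι → ℕ} {i : ι}

-- The variable `t_l` is `X (some l)` and `h` is `X none`.
def tHat (ω : ι → ℕ) (i : ι) : MvPolynomial (Option ι) R :=
  ∑ l, (ω l : MvPolynomial (Option ι) R) * X (some l) - X (some i)

def factor (ω : ι → ℕ) (i : ι) (N : ℕ) : MvPolynomial (Option ι) R :=
  ∑ j ∈ range N, (tHat ω i + X none) ^ (N - 1 - j) * X (some i) ^ j

theorem isHomogeneous_factor (N : ℕ) :
    (factor ω i N : MvPolynomial (Option ι) R).IsHomogeneous (N - 1) := by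
  have hy : (tHat ω i + X none : MvPolynomial (Option ι) R).IsHomogeneous 1 := by
    refine (IsHomogeneous.sub (IsHomogeneous.sum _ _ _ fun l _ => ?_) (isHomogeneous_X _ _)).add
      (isHomogeneous_X _ _)
    simpa only [map_natCast] using isHomogeneous_C_mul_X (R := R) (ω l : R) (some l)
  simpa only [factor, one_mul] using (isHomogeneous_X R (some i)).sum_range_pow_mul_pow hy N

theorem degreeOf_tHat_add_X_none (hωi : ω i = 1) :
    (tHat ω i + X none : MvPolynomial (Option ι) R).degreeOf (some i) = 0 := by
  classical
  have hfree : tHat ω i + X none ∈ supported R {v : Option ι | v ≠ some i} := by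
    have hX : ∀ v ≠ some i, (X v : MvPolynomial (Option ι) R) ∈ supported R {v | v ≠ some i} :=
      fun v hv => Algebra.subset_adjoin ⟨v, hv, rfl⟩
    rw [tHat, ← add_sum_erase _ _ (mem_univ i), hωi, Nat.cast_one, one_mul, add_sub_cancel_left]
    exact add_mem (sum_mem fun l hl => mul_mem (natCast_mem _ _)
      (hX _ (by simpa using ne_of_mem_erase hl))) (hX none (by simp))
  by_contra h
  exact mem_supported.1 hfree (mem_vars_iff_degreeOf_ne_zero.2 h) rfl

def exponent (δ N : ι → ℕ) : Option ι →₀ ℕ :=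
  Finsupp.equivFunOnFinite.symm fun v => v.elim (∑ j, δ j) fun j => N j - δ j - 1

theorem exponent_update [DecidableEq ι] {δ N : ι → ℕ} {m : ℕ} (hδ : δ i + 1 ≤ N i)
    (hm : N i ≤ m) :
    exponent δ (Function.update N i m) =
      exponent δ N + Finsupp.single (some i) (m - N i) := by
  ext (_ | j)
  · simp [exponent]
  · rcases eq_or_ne j i with rfl | hj
    · simp only [exponent, Finsupp.coe_add, Pi.add_apply, Finsupp.coe_equivFunOnFinite_symm,
        Option.elim_some, Function.update_self, Finsupp.single_eq_same]
      omega
    · simp [exponent, Function.update_of_ne hj, Ne.symm hj]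

theorem coeff_exponent_update_prod_factor_update [DecidableEq ι] {δ N : ι → ℕ} {m : ℕ} (hωi : ω i = 1)
    (hδ : δ i + 1 ≤ N i) (hN : ∑ j ∈ univ.erase i, (N j - 1) + δ i ≤ N i - 1) (hm : N i ≤ m) :
    coeff (exponent δ (Function.update N i m))
        (∏ j, (factor ω j (Function.update N i m j) : MvPolynomial (Option ι) R)) =
      coeff (exponent δ N) (∏ j, factor ω j (N j)) := by
  set Q : MvPolynomial (Option ι) R := ∏ j ∈ univ.erase i, factor ω j (N j)
  have hQ : Q.degreeOf (some i) ≤ exponent δ N (some i) := by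
    have := (degreeOf_le_totalDegree Q (some i)).trans
      (IsHomogeneous.prod _ _ _ fun j _ => isHomogeneous_factor (N j)).totalDegree_le
    simp only [exponent, Finsupp.coe_equivFunOnFinite_symm, Option.elim_some]
    omega
  have hprod : ∏ j, (factor ω j (Function.update N i m j) : MvPolynomial (Option ι) R) =
      factor ω i m * Q := by
    rw [← mul_prod_erase univ _ (mem_univ i), Function.update_self]
    exact congrArg _ (prod_congr rfl fun j hj => by rw [Function.update_of_ne (ne_of_mem_erase hj)])
  rw [hprod, ← mul_prod_erase univ _ (mem_univ i), exponent_update hδ hm]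
  exact coeff_add_single_sum_range_pow_mul_X_pow_mul (degreeOf_tHat_add_X_none hωi) hQ hm

end KalmanDegree

end


theorem kalman_degree_stabilization_general (k : ℕ)
    (n ω δ : Fin k → ℕ)
    (hδ : ∀ j, δ j + 1 ≤ n j)
    (d : (Fin k → ℕ) → ℤ)
    (hd : ∀ N : Fin k → ℕ, d N =
      MvPolynomial.coeff
        (Finsupp.equivFunOnFinite.symm
          (fun v : Option (Fin k) => v.elim (∑ j : Fin k, δ j)
            (fun j => N j - δ j - 1)))
        (∏ i : Fin k, ∑ j ∈ Finset.range (N i),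
          ((∑ l : Fin k, (ω l : MvPolynomial (Option (Fin k)) ℤ) *
              MvPolynomial.X (some l)) - MvPolynomial.X (some i) +
            MvPolynomial.X (none : Option (Fin k))) ^ (N i - 1 - j) *
            MvPolynomial.X (some i) ^ j))
    (i : Fin k) (hωi : ω i = 1)
    (hni : n i - 1 = (∑ j ∈ Finset.univ.filter (fun j : Fin k => j ≠ i), (n j - 1)) + δ i)
    (m : ℕ) (hm : n i ≤ m) :
    d (Function.update n i m) = d n := by
  rw [Finset.filter_ne'] at hni
  rw [hd, hd]
  exact KalmanDegree.coeff_exponent_update_prod_factor_update hωi (hδ i) hni.ge hm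

/-- **Proposition 6.1, stabilization.** In `ℤ[t_1,…,t_k,h]` (variables
`some i = t_{i+1}`, `none = h`), let `d(N)` be the coefficient of
`h^{∑δ_j} ∏_j t_j^{N_j−δ_j−1}` in `P(N,ω) = ∏_i ∑_{j=0}^{N_i−1} (t̂_i+h)^{N_i−1−j} t_i^j`,
where `t̂_i = (∑_l ω_l t_l) − t_i`. If `ω_i = 1` and `n_i − 1 = ∑_{j≠i}(n_j−1) + δ_i`,
then `d` stabilizes in the `i`-th entry: `d(n with i-th entry m) = d(n)` for all `m ≥ n_i`. -/
theorem kalman_degree_stabilization (k : ℕ) (hk : 1 ≤ k)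
    (n ω δ : Fin k → ℕ) (hn : ∀ j, 1 ≤ n j) (hω : ∀ j, 1 ≤ ω j)
    (hδ : ∀ j, δ j + 1 ≤ n j)
    (d : (Fin k → ℕ) → ℤ)
    (hd : ∀ N : Fin k → ℕ, d N =
      MvPolynomial.coeff
        (Finsupp.equivFunOnFinite.symm
          (fun v : Option (Fin k) => v.elim (∑ j : Fin k, δ j)
            (fun j => N j - δ j - 1)))
        (∏ i : Fin k, ∑ j ∈ Finset.range (N i),
          ((∑ l : Fin k, (ω l : MvPolynomial (Option (Fin k)) ℤ) *
              MvPolynomial.X (some l)) - MvPolynomial.X (some i) +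
            MvPolynomial.X (none : Option (Fin k))) ^ (N i - 1 - j) *
            MvPolynomial.X (some i) ^ j))
    (i : Fin k) (hωi : ω i = 1)
    (hni : n i - 1 = (∑ j ∈ Finset.univ.filter (fun j : Fin k => j ≠ i), (n j - 1)) + δ i)
    (m : ℕ) (hm : n i ≤ m) :
    d (Function.update n i m) = d n :=
  kalman_degree_stabilization_general k n ω δ hδ d hd i hωi hni m hm
end

section
/- Let k ≥ 1 and for each i ∈ {1,…,k} let V_i be a finite-dimensional complex vector space of dimension n_i equipped with a nondegenerate symmetric bilinear form B_i. Fix nonzero vectors x_i ∈ V_i, and in the tensor product V_1 ⊗ ⋯ ⊗ V_k define, for each i, the subspace W_i := { x_1 ⊗ ⋯ ⊗ x_{i−1} ⊗ w ⊗ x_{i+1} ⊗ ⋯ ⊗ x_k : w ∈ V_i with B_i(x_i, w) = 0 }. Let r be the number of indices i with B_i(x_i, x_i) = 0. Then the dimension of the subspace W_1 + ⋯ + W_k of V_1 ⊗ ⋯ ⊗ V_k equals ∑_{i=1}^k (n_i − 1) − max(0, r − 1). -/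
open scoped TensorProduct
open Module Submodule Function Finset

/-!
Choose for each `i` a basis of `V i` containing `x i` in which a subset `S i` spans `x i`'s
orthogonal complement, with `x i ∈ S i` exactly when `x i` is isotropic. In the product basis
of the tensor product, `W i` is spanned by the basis tensors obtained from `⨂ x` by replacing the
`i`-th factor with an element of `S i`. Two of these sets of basis tensors meet at most in `⨂ x`,
which lies in the `i`-th one exactly when `x i` is isotropic, so the union has
`∑ (n i - 1) - r` elements plus one more if `r ≠ 0`.
-/

theorem Submodule.exists_linearIndepOn_insert_span_eq {𝕜 V : Type*} [DivisionRing 𝕜]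
    [AddCommGroup V] [Module 𝕜 V] (K : Submodule 𝕜 V) {x : V} (hx : x ≠ 0) :
    ∃ u : Set V, LinearIndepOn 𝕜 id (insert x u) ∧ span 𝕜 u = K ∧ (x ∈ u ↔ x ∈ K) := by
  have extend_span : ∀ {s : Set V} (hs : LinearIndepOn 𝕜 id s) (hsK : s ⊆ K),
      span 𝕜 (hs.extend hsK) = K := fun hs hsK => by
    rw [hs.span_extend_eq_span, span_eq]
  by_cases hxK : x ∈ K
  · have hs : LinearIndepOn 𝕜 id {x} := .singleton hx
    have hsK : {x} ⊆ (K : Set V) := Set.singleton_subset_iff.2 hxK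
    have hxu : x ∈ hs.extend hsK := hs.subset_extend hsK rfl
    refine ⟨hs.extend hsK, ?_, extend_span hs hsK, iff_of_true hxu hxK⟩
    rw [Set.insert_eq_of_mem hxu]
    exact hs.linearIndepOn_extend hsK
  · have hs : LinearIndepOn 𝕜 id (∅ : Set V) := linearIndepOn_empty 𝕜 id
    have hsK : ∅ ⊆ (K : Set V) := Set.empty_subset _
    refine ⟨hs.extend hsK, (hs.linearIndepOn_extend hsK).id_insert ?_, extend_span hs hsK,
      iff_of_false (fun h => hxK (hs.extend_subset hsK h)) hxK⟩
    rwa [extend_span hs hsK]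

theorem Submodule.exists_basis_with_vector_and_span_image_eq {𝕜 V : Type*} [DivisionRing 𝕜]
    [AddCommGroup V] [Module 𝕜 V] [FiniteDimensional 𝕜 V] (K : Submodule 𝕜 V) {x : V}
    (hx : x ≠ 0) :
    ∃ (κ : Set V) (_ : Fintype κ) (b : Basis κ 𝕜 V) (i₀ : κ) (S : Finset κ),
      b i₀ = x ∧ span 𝕜 (b '' S) = K ∧ (i₀ ∈ S ↔ x ∈ K) := by
  classical
  obtain ⟨u, hind, hspan, hxu⟩ := K.exists_linearIndepOn_insert_span_eq hx
  let b := Basis.extend hind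
  have hsub : insert x u ⊆ hind.extend (Set.subset_univ _) := Basis.subset_extend hind
  refine ⟨_, FiniteDimensional.fintypeBasisIndex b, b, ⟨x, hsub (Set.mem_insert x u)⟩,
    univ.filter (fun j => (j : V) ∈ u), Basis.extend_apply_self hind _, ?_, ?_⟩
  · rw [← hspan]
    congr 1
    ext y
    simpa [b] using fun hy => hsub (Set.mem_insert_of_mem x hy)
  · simpa using hxu

theorem Finset.cast_card_erase_eq_ite {R β : Type*} [AddGroupWithOne R] [DecidableEq β]
    (s : Finset β) (a : β) : ((s.erase a).card : R) = s.card - if a ∈ s then 1 else 0 := by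
  split_ifs with h
  · exact cast_card_erase_of_mem h
  · rw [erase_eq_of_notMem h, sub_zero]

theorem Finset.card_biUnion_of_inter_subset_singleton {α β : Type*} [DecidableEq β]
    (s : Finset α) (A : α → Finset β) (t : β)
    (hA : ∀ i ∈ s, ∀ j ∈ s, i ≠ j → A i ∩ A j ⊆ {t}) :
    ((s.biUnion A).card : ℤ) =
      ∑ i ∈ s, ((A i).card : ℤ) - max 0 (((s.filter (t ∈ A ·)).card : ℤ) - 1) := by
  have hdisj : (s : Set α).PairwiseDisjoint fun i => (A i).erase t := by
    intro i hi j hj hij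
    rw [Function.onFun, Finset.disjoint_left]
    intro z hzi hzj
    exact (mem_erase.1 hzi).1 (mem_singleton.1 <| hA i hi j hj hij <|
      mem_inter.2 ⟨(mem_erase.1 hzi).2, (mem_erase.1 hzj).2⟩)
  have herase : ((s.biUnion A).erase t).card = ∑ i ∈ s, ((A i).erase t).card := by
    rw [erase_biUnion, card_biUnion hdisj]
  have hmem : t ∈ s.biUnion A ↔ 0 < (s.filter (t ∈ A ·)).card := by
    simp [card_pos, Finset.Nonempty]
  have key : ((s.biUnion A).card : ℤ) = ∑ i ∈ s, ((A i).card : ℤ)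
      - (s.filter (t ∈ A ·)).card + if t ∈ s.biUnion A then 1 else 0 := by
    have := congrArg (Nat.cast : ℕ → ℤ) herase
    push_cast at this
    simp only [cast_card_erase_eq_ite, sum_sub_distrib, sum_boole] at this
    linarith
  rw [key]
  split_ifs with h <;> rw [hmem] at h <;> omega

theorem LinearIndependent.finrank_span_image_finset {R M ι : Type*} [Ring R] [Nontrivial R]
    [StrongRankCondition R] [AddCommGroup M] [Module R M] {v : ι → M}
    (hv : LinearIndependent R v) (s : Finset ι) :
    finrank R ↥(span R (v '' s)) = s.card := by
  rw [Set.image_eq_range]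
  exact (finrank_span_eq_card (hv.comp _ Subtype.val_injective)).trans (Fintype.card_coe s)

theorem Finset.card_biUnion_image_update {ι : Type*} [Fintype ι] [DecidableEq ι]
    {κ : ι → Type*} [∀ i, DecidableEq (κ i)] (t : ∀ i, κ i) (S : ∀ i, Finset (κ i)) :
    ((univ.biUnion fun i => (S i).image (update t i)).card : ℤ) =
      ∑ i, ((S i).card : ℤ) - max 0 (((univ.filter fun i => t i ∈ S i).card : ℤ) - 1) := by
  have hinter : ∀ i ∈ univ, ∀ j ∈ univ, i ≠ j →
      (S i).image (update t i) ∩ (S j).image (update t j) ⊆ {t} := by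
    intro i _ j _ hij z hz
    obtain ⟨⟨a, -, rfl⟩, ⟨b, -, hb⟩⟩ := And.imp mem_image.1 mem_image.1 (mem_inter.1 hz)
    have hat : a = t i := by simpa [hij] using (congrFun hb i).symm
    simp [hat]
  rw [card_biUnion_of_inter_subset_singleton _ _ t hinter]
  simp only [card_image_of_injective _ (update_injective t _), mem_image,
    update_eq_self_iff, exists_eq_right]

theorem PiTensorProduct.finrank_iSup_map_tprod_update {ι R : Type*} [Fintype ι] [DecidableEq ι]
    [CommRing R] [Nontrivial R] {κ : ι → Type*} [∀ i, DecidableEq (κ i)]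
    {V : ι → Type*} [∀ i, AddCommGroup (V i)] [∀ i, Module R (V i)]
    (b : ∀ i, Basis (κ i) R (V i)) (t : ∀ i, κ i) (S : ∀ i, Finset (κ i)) :
    finrank R ↥(⨆ i, (span R (b i '' S i)).map
        ((tprod R (s := V)).toLinearMap (fun j => b j (t j)) i)) =
      (univ.biUnion fun i => (S i).image (update t i)).card := by
  set β := Basis.piTensorProduct b
  have hspan : ∀ i, (span R (b i '' S i)).map
      ((tprod R (s := V)).toLinearMap (fun j => b j (t j)) i) =
        span R (β '' ((S i).image (update t i) : Set (∀ i, κ i))) := by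
    intro i
    rw [map_span, Set.image_image, coe_image, Set.image_image]
    congr 1
    refine Set.image_congr fun a _ => ?_
    simp [β, MultilinearMap.toLinearMap_apply, apply_update (fun j => b j)]
  rw [iSup_congr hspan, ← span_iUnion, ← Set.image_iUnion]
  have hcoe : (⋃ i, ((S i).image (update t i) : Set (∀ i, κ i))) =
      ↑(univ.biUnion fun i => (S i).image (update t i)) := by simp
  rw [hcoe, β.linearIndependent.finrank_span_image_finset]

theorem dim_sum_W_general (k : ℕ)
    (V : Fin k → Type*) [∀ i, AddCommGroup (V i)] [∀ i, Module ℂ (V i)]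
    [∀ i, FiniteDimensional ℂ (V i)]
    (n : Fin k → ℕ) (hn : ∀ i, Module.finrank ℂ (V i) = n i)
    (B : ∀ i, LinearMap.BilinForm ℂ (V i))
    (hBnd : ∀ i, (B i).Nondegenerate)
    (x : ∀ i, V i) (hx : ∀ i, x i ≠ 0)
    (W : Fin k → Submodule ℂ (⨂[ℂ] i, V i))
    (hW : ∀ i, W i = Submodule.map
      ((PiTensorProduct.tprod ℂ (s := V)).toLinearMap x i)
      (LinearMap.ker (B i (x i))))
    (r : ℕ) (hr : r = Set.ncard {i : Fin k | B i (x i) (x i) = 0}) :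
    (Module.finrank ℂ ↥(⨆ i, W i) : ℤ) =
      (∑ i : Fin k, ((n i : ℤ) - 1)) - max 0 ((r : ℤ) - 1) := by
  classical
  have hker : ∀ i, Module.finrank ℂ (LinearMap.ker (B i (x i))) + 1 = n i := fun i =>
    hn i ▸ Module.Dual.finrank_ker_add_one_of_ne_zero fun h =>
      hx i <| (hBnd i).1 (x i) fun y => by simp [h]
  choose κ _ b t S hbt hspan hmem using fun i =>
    (LinearMap.ker (B i (x i))).exists_basis_with_vector_and_span_image_eq (hx i)
  have hx_eq : x = fun i => b i (t i) := funext fun i => (hbt i).symm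
  have hcard : ∀ i, ((S i).card : ℤ) = n i - 1 := fun i => by
    have := hker i
    rw [← hspan i, (b i).linearIndependent.finrank_span_image_finset] at this
    omega
  have hr' : (univ.filter fun i => t i ∈ S i).card = r := by
    simp_rw [hmem, LinearMap.mem_ker, hr, Set.ncard_eq_toFinset_card', Set.toFinset_ofPred]
  subst hx_eq
  rw [iSup_congr fun i => (hW i).trans (congrArg _ (hspan i).symm),
    PiTensorProduct.finrank_iSup_map_tprod_update, card_biUnion_image_update, hr']
  simp only [hcard]

/-- **linear-algebra content of Theorem 2.7 for ordinary tensors.**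
For nonzero vectors `x_i` in complex vector spaces `V_i` with nondegenerate symmetric
bilinear forms `B_i`, the subspace `W_1 + ⋯ + W_k ⊆ V_1 ⊗ ⋯ ⊗ V_k`, where
`W_i = x_1 ⊗ ⋯ ⊗ (⟨x_i⟩^⊥) ⊗ ⋯ ⊗ x_k`, has dimension `∑_i (n_i − 1) − max(0, r − 1)`,
`r` being the number of isotropic components `x_i`. -/
theorem dim_sum_W (k : ℕ) (hk : 1 ≤ k)
    (V : Fin k → Type*) [∀ i, AddCommGroup (V i)] [∀ i, Module ℂ (V i)]
    [∀ i, FiniteDimensional ℂ (V i)]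
    (n : Fin k → ℕ) (hn : ∀ i, Module.finrank ℂ (V i) = n i)
    (B : ∀ i, LinearMap.BilinForm ℂ (V i))
    (hBnd : ∀ i, (B i).Nondegenerate) (hBsymm : ∀ i, (B i).IsSymm)
    (x : ∀ i, V i) (hx : ∀ i, x i ≠ 0)
    (W : Fin k → Submodule ℂ (⨂[ℂ] i, V i))
    (hW : ∀ i, W i = Submodule.map
      ((PiTensorProduct.tprod ℂ (s := V)).toLinearMap x i)
      (LinearMap.ker (B i (x i))))
    (r : ℕ) (hr : r = Set.ncard {i : Fin k | B i (x i) (x i) = 0}) :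
    (Module.finrank ℂ ↥(⨆ i, W i) : ℤ) =
      (∑ i : Fin k, ((n i : ℤ) - 1)) - max 0 ((r : ℤ) - 1) :=
  dim_sum_W_general k V n hn B hBnd x hx W hW r hr
end
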